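/- arXiv:math-ph/0610088 — 6 statements merged into one kernel-verified Lean document; each statement's English description precedes it below -/
import Mathlib

section
/- Let n ≥ 1 and let g, k : ℝ → ℂⁿ be functions that are differentiable at every x ≠ 0 with derivatives g′ and k′, such that g, g′, k, k′ are square-integrable on ℝ, g and k have one-sided limits g(0+), g(0−), k(0+), k(0−) at 0, and g(x) → 0, k(x) → 0 as x → +∞ and as x → −∞. Then the functions x ↦ ⟨−i g′(x), k(x)⟩ and x ↦ ⟨g(x), −i k′(x)⟩ are integrable on ℝ and ∫_ℝ ⟨−i g′(x), k(x)⟩ dx − ∫_ℝ ⟨g(x), −i k′(x)⟩ dx = i⟨g(0+), k(0+)⟩ − i⟨g(0−), k(0−)⟩. -/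
/-!
The function `F x = ⟪k x, g x⟫` has derivative `⟪k x, g' x⟫ + ⟪k' x, g x⟫` off `0`, which is
integrable since each term pairs two `L²` functions. The fundamental theorem of calculus on
`(-∞, 0]` and `(0, ∞)`, with `F → 0` at `±∞`, gives its integral as the jump `F(0-) - F(0+)`;
pulling `-i` out of both inner products turns this into the identity.
-/

open MeasureTheory Filter Set Topology

theorem MeasureTheory.MemLp.integrable_inner {α 𝕜 E : Type*} [RCLike 𝕜] [NormedAddCommGroup E]
    [InnerProductSpace 𝕜 E] {m : MeasurableSpace α} {μ : Measure α} {f g : α → E}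
    (hf : MemLp f 2 μ) (hg : MemLp g 2 μ) :
    Integrable (fun x => (inner 𝕜 (f x) (g x) : 𝕜)) μ := by
  refine (L2.integrable_inner (𝕜 := 𝕜) (hf.toLp f) (hg.toLp g)).congr ?_
  filter_upwards [hf.coeFn_toLp, hg.coeFn_toLp] with x hfx hgx
  rw [hfx, hgx]

section ImproperFTC

variable {E : Type*} [NormedAddCommGroup E] [NormedSpace ℝ E] [CompleteSpace E] {f f' : ℝ → E} {a : ℝ} {l m : E}

-- Redefining `f` at `a` as its one-sided limit reduces this to
-- `integral_Ioi_of_hasDerivAt_of_tendsto`, which asks for continuity within `Ici a`.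
theorem integral_Ioi_of_hasDerivAt_of_tendsto_nhdsGT
    (hderiv : ∀ x ∈ Ioi a, HasDerivAt f (f' x) x) (f'int : IntegrableOn f' (Ioi a))
    (ha : Tendsto f (𝓝[>] a) (𝓝 l)) (htop : Tendsto f atTop (𝓝 m)) :
    ∫ x in Ioi a, f' x = m - l := by
  rw [← Ici_sdiff_left] at ha
  have hderiv' : ∀ x ∈ Ioi a, HasDerivAt (Function.update f a l) (f' x) x := fun x hx =>
    (hderiv x hx).congr_of_eventuallyEq <| by
      filter_upwards [eventually_ne_nhds (ne_of_gt hx)] with y hy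
      exact Function.update_of_ne hy l f
  have htop' : Tendsto (Function.update f a l) atTop (𝓝 m) :=
    htop.congr' <| by
      filter_upwards [eventually_ne_atTop a] with x hx
      exact (Function.update_of_ne hx l f).symm
  simpa using integral_Ioi_of_hasDerivAt_of_tendsto
    (continuousWithinAt_update_same.mpr ha) hderiv' f'int htop'

theorem integral_Iic_of_hasDerivAt_of_tendsto_nhdsLT
    (hderiv : ∀ x ∈ Iio a, HasDerivAt f (f' x) x) (f'int : IntegrableOn f' (Iic a))
    (ha : Tendsto f (𝓝[<] a) (𝓝 l)) (hbot : Tendsto f atBot (𝓝 m)) :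
    ∫ x in Iic a, f' x = l - m := by
  rw [← Iic_sdiff_right] at ha
  have hderiv' : ∀ x ∈ Iio a, HasDerivAt (Function.update f a l) (f' x) x := fun x hx =>
    (hderiv x hx).congr_of_eventuallyEq <| by
      filter_upwards [eventually_ne_nhds (ne_of_lt hx)] with y hy
      exact Function.update_of_ne hy l f
  have hbot' : Tendsto (Function.update f a l) atBot (𝓝 m) :=
    hbot.congr' <| by
      filter_upwards [eventually_ne_atBot a] with x hx
      exact (Function.update_of_ne hx l f).symm
  simpa using integral_Iic_of_hasDerivAt_of_tendsto
    (continuousWithinAt_update_same.mpr ha) hderiv' f'int hbot'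

theorem integral_of_hasDerivAt_of_ne_of_tendsto {lm lp mbot mtop : E}
    (hderiv : ∀ x, x ≠ a → HasDerivAt f (f' x) x) (hf' : Integrable f')
    (hlt : Tendsto f (𝓝[<] a) (𝓝 lm)) (hgt : Tendsto f (𝓝[>] a) (𝓝 lp))
    (hbot : Tendsto f atBot (𝓝 mbot)) (htop : Tendsto f atTop (𝓝 mtop)) :
    ∫ x, f' x = (mtop - lp) + (lm - mbot) := by
  rw [← intervalIntegral.integral_Iic_add_Ioi hf'.integrableOn hf'.integrableOn,
    integral_Iic_of_hasDerivAt_of_tendsto_nhdsLT (fun x hx => hderiv x (ne_of_lt hx))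
      hf'.integrableOn hlt hbot,
    integral_Ioi_of_hasDerivAt_of_tendsto_nhdsGT (fun x hx => hderiv x (ne_of_gt hx))
      hf'.integrableOn hgt htop]
  abel

end ImproperFTC

theorem integral_inner_add_integral_inner_deriv_eq {𝕜 E : Type*} [RCLike 𝕜]
    [NormedAddCommGroup E] [InnerProductSpace 𝕜 E] [NormedSpace ℝ E] [CompleteSpace E]
    {g k g' k' : ℝ → E} {gp gm kp km : E}
    (hg : ∀ x, x ≠ 0 → HasDerivAt g (g' x) x) (hk : ∀ x, x ≠ 0 → HasDerivAt k (k' x) x)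
    (hgL2 : MemLp g 2 volume) (hg'L2 : MemLp g' 2 volume)
    (hkL2 : MemLp k 2 volume) (hk'L2 : MemLp k' 2 volume)
    (hgp : Tendsto g (𝓝[>] 0) (𝓝 gp)) (hgm : Tendsto g (𝓝[<] 0) (𝓝 gm))
    (hkp : Tendsto k (𝓝[>] 0) (𝓝 kp)) (hkm : Tendsto k (𝓝[<] 0) (𝓝 km))
    (hgtop : Tendsto g atTop (𝓝 0)) (hgbot : Tendsto g atBot (𝓝 0))
    (hktop : Tendsto k atTop (𝓝 0)) (hkbot : Tendsto k atBot (𝓝 0)) :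
    (∫ x, (inner 𝕜 (k x) (g' x) : 𝕜)) + ∫ x, (inner 𝕜 (k' x) (g x) : 𝕜) =
      inner 𝕜 km gm - inner 𝕜 kp gp := by
  have hint₁ := hkL2.integrable_inner (𝕜 := 𝕜) hg'L2
  have hint₂ := hk'L2.integrable_inner (𝕜 := 𝕜) hgL2
  rw [← integral_add hint₁ hint₂,
    integral_of_hasDerivAt_of_ne_of_tendsto (fun x hx => (hk x hx).inner 𝕜 (hg x hx))
      (hint₁.add hint₂) (hkm.inner hgm) (hkp.inner hgp)
      (by simpa using hkbot.inner (𝕜 := 𝕜) hgbot) (by simpa using hktop.inner (𝕜 := 𝕜) hgtop)]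
  abel

theorem stmt_0_general (n : ℕ)
    (g k g' k' : ℝ → EuclideanSpace ℂ (Fin n))
    (hg : ∀ x : ℝ, x ≠ 0 → HasDerivAt g (g' x) x)
    (hk : ∀ x : ℝ, x ≠ 0 → HasDerivAt k (k' x) x)
    (hgL2 : MemLp g 2 (volume : Measure ℝ))
    (hg'L2 : MemLp g' 2 (volume : Measure ℝ))
    (hkL2 : MemLp k 2 (volume : Measure ℝ))
    (hk'L2 : MemLp k' 2 (volume : Measure ℝ))
    (gp gm kp km : EuclideanSpace ℂ (Fin n))
    (hgp : Tendsto g (nhdsWithin 0 (Ioi 0)) (nhds gp))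
    (hgm : Tendsto g (nhdsWithin 0 (Iio 0)) (nhds gm))
    (hkp : Tendsto k (nhdsWithin 0 (Ioi 0)) (nhds kp))
    (hkm : Tendsto k (nhdsWithin 0 (Iio 0)) (nhds km))
    (hgtop : Tendsto g atTop (nhds 0)) (hgbot : Tendsto g atBot (nhds 0))
    (hktop : Tendsto k atTop (nhds 0)) (hkbot : Tendsto k atBot (nhds 0)) :
    Integrable (fun x : ℝ => (inner ℂ (k x) ((-Complex.I) • g' x) : ℂ)) volume ∧
    Integrable (fun x : ℝ => (inner ℂ ((-Complex.I) • k' x) (g x) : ℂ)) volume ∧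
    (∫ x : ℝ, (inner ℂ (k x) ((-Complex.I) • g' x) : ℂ)) -
      (∫ x : ℝ, (inner ℂ ((-Complex.I) • k' x) (g x) : ℂ)) =
      Complex.I * (inner ℂ kp gp : ℂ) - Complex.I * (inner ℂ km gm : ℂ) := by
  have hpull₁ : (fun x => (inner ℂ (k x) ((-Complex.I) • g' x) : ℂ)) =
      fun x => -Complex.I * inner ℂ (k x) (g' x) := by
    funext x; rw [inner_smul_right]
  have hpull₂ : (fun x => (inner ℂ ((-Complex.I) • k' x) (g x) : ℂ)) =
      fun x => Complex.I * inner ℂ (k' x) (g x) := by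
    funext x; simp [inner_smul_left]
  refine ⟨hpull₁ ▸ (hkL2.integrable_inner hg'L2).const_mul _,
    hpull₂ ▸ (hk'L2.integrable_inner hgL2).const_mul _, ?_⟩
  have hparts := integral_inner_add_integral_inner_deriv_eq (𝕜 := ℂ) hg hk hgL2 hg'L2 hkL2 hk'L2
    hgp hgm hkp hkm hgtop hgbot hktop hkbot
  rw [hpull₁, hpull₂, integral_const_mul, integral_const_mul]
  linear_combination (-Complex.I) * hparts

/-- Abstract Green identity for the adjoint of the momentum operator `-i d/dx`
restricted to functions vanishing at `0`.  The pairing `⟨a, b⟩` of the paper is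
linear in the first argument, i.e. `⟨a, b⟩ = inner b a` in Mathlib's convention. -/
theorem stmt_0 (n : ℕ) (hn : 1 ≤ n)
    (g k g' k' : ℝ → EuclideanSpace ℂ (Fin n))
    (hg : ∀ x : ℝ, x ≠ 0 → HasDerivAt g (g' x) x)
    (hk : ∀ x : ℝ, x ≠ 0 → HasDerivAt k (k' x) x)
    (hgL2 : MemLp g 2 (volume : Measure ℝ))
    (hg'L2 : MemLp g' 2 (volume : Measure ℝ))
    (hkL2 : MemLp k 2 (volume : Measure ℝ))
    (hk'L2 : MemLp k' 2 (volume : Measure ℝ))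
    (gp gm kp km : EuclideanSpace ℂ (Fin n))
    (hgp : Tendsto g (nhdsWithin 0 (Ioi 0)) (nhds gp))
    (hgm : Tendsto g (nhdsWithin 0 (Iio 0)) (nhds gm))
    (hkp : Tendsto k (nhdsWithin 0 (Ioi 0)) (nhds kp))
    (hkm : Tendsto k (nhdsWithin 0 (Iio 0)) (nhds km))
    (hgtop : Tendsto g atTop (nhds 0)) (hgbot : Tendsto g atBot (nhds 0))
    (hktop : Tendsto k atTop (nhds 0)) (hkbot : Tendsto k atBot (nhds 0)) :
    Integrable (fun x : ℝ => (inner ℂ (k x) ((-Complex.I) • g' x) : ℂ)) volume ∧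
    Integrable (fun x : ℝ => (inner ℂ ((-Complex.I) • k' x) (g x) : ℂ)) volume ∧
    (∫ x : ℝ, (inner ℂ (k x) ((-Complex.I) • g' x) : ℂ)) -
      (∫ x : ℝ, (inner ℂ ((-Complex.I) • k' x) (g x) : ℂ)) =
      Complex.I * (inner ℂ kp gp : ℂ) - Complex.I * (inner ℂ km gm : ℂ) :=
  stmt_0_general n g k g' k' hg hk hgL2 hg'L2 hkL2 hk'L2 gp gm kp km hgp hgm hkp hkm hgtop hgbot
    hktop hkbot
end

section
/- Let H₀ and H₁ be complex Hilbert spaces, let K := H₀ × H₁ × H₁ be equipped with the product inner product (the sum of the componentwise inner products), and define the linear relation Θ̃ := { ((u, v, v), (0, −w, w)) : u ∈ H₀, v ∈ H₁, w ∈ H₁ } ⊆ K × K. Then the adjoint relation Θ̃* := { (k, k′) ∈ K × K : ⟨h′, k⟩ = ⟨h, k′⟩ for all (h, h′) ∈ Θ̃ } is equal to Θ̃; in other words, the relation Θ̃ is self-adjoint. -/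
/-!
Pairing `((a, b, c), (a', b', c'))` against a generic element `((u, v, v), (0, -w, w))` of `Θ̃`
gives `⟨c - b, w⟩ = ⟨a', u⟩ + ⟨b' + c', v⟩`. Since `u`, `v`, `w` vary independently, this holds
for all of them exactly when `c = b`, `a' = 0` and `b' = -c'`, i.e. when the pair lies in `Θ̃`.
-/

open scoped InnerProductSpace

section
variable {𝕜 E F G : Type*} [RCLike 𝕜]
  [NormedAddCommGroup E] [InnerProductSpace 𝕜 E]
  [NormedAddCommGroup F] [InnerProductSpace 𝕜 F]
  [NormedAddCommGroup G] [InnerProductSpace 𝕜 G]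

theorem forall_inner_eq_inner_add_inner_iff {x : E} {y : F} {z : G} :
    (∀ u v w, ⟪x, w⟫_𝕜 = ⟪y, u⟫_𝕜 + ⟪z, v⟫_𝕜) ↔ x = 0 ∧ y = 0 ∧ z = 0 := by
  refine ⟨fun h => ?_, ?_⟩
  · exact ⟨by simpa using h 0 0 x, by simpa using (h y 0 0).symm, by simpa using (h 0 z 0).symm⟩
  · rintro ⟨rfl, rfl, rfl⟩ u v w
    simp

end

/-- The linear relation `Θ̃ = {((u,v,v),(0,-w,w))}` in `H₀ × H₁ × H₁` (with the product
inner product, i.e. the sum of the componentwise inner products) is self-adjoint: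
it coincides with its adjoint relation.  The pairing `ip` below is the product inner
product written so as to be linear in its first argument, matching `⟨·,·⟩` of the
paper (`⟨a, b⟩ = inner b a` in Mathlib's convention). -/
theorem stmt_2 (H₀ H₁ : Type*) [NormedAddCommGroup H₀] [InnerProductSpace ℂ H₀]
    [NormedAddCommGroup H₁] [InnerProductSpace ℂ H₁]
    (ip : (H₀ × H₁ × H₁) → (H₀ × H₁ × H₁) → ℂ)
    (hip : ∀ a b : H₀ × H₁ × H₁,
      ip a b = (inner ℂ b.1 a.1 : ℂ) + (inner ℂ b.2.1 a.2.1 : ℂ) + (inner ℂ b.2.2 a.2.2 : ℂ))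
    (Θ : Set ((H₀ × H₁ × H₁) × (H₀ × H₁ × H₁)))
    (hΘ : Θ = {p | ∃ (u : H₀) (v w : H₁), p = ((u, v, v), (0, -w, w))}) :
    {q : (H₀ × H₁ × H₁) × (H₀ × H₁ × H₁) | ∀ p ∈ Θ, ip p.2 q.1 = ip p.1 q.2} = Θ := by
  ext ⟨⟨a, b, c⟩, a', b', c'⟩
  have hadj : (∀ p ∈ Θ, ip p.2 (a, b, c) = ip p.1 (a', b', c')) ↔
      ∀ (u : H₀) (v w : H₁), ip (0, -w, w) (a, b, c) = ip (u, v, v) (a', b', c') := by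
    subst hΘ
    exact ⟨fun h u v w => h _ ⟨u, v, w, rfl⟩, by rintro h _ ⟨u, v, w, rfl⟩; exact h u v w⟩
  have hpair (u : H₀) (v w : H₁) : ip (0, -w, w) (a, b, c) = ip (u, v, v) (a', b', c') ↔
      ⟪c - b, w⟫_ℂ = ⟪a', u⟫_ℂ + ⟪b' + c', v⟫_ℂ := by
    rw [hip, hip, inner_sub_left, inner_add_left]
    simp only [inner_zero_right, inner_neg_right]
    apply iff_of_eq
    congr 1 <;> ring
  rw [Set.mem_ofPred_eq, hadj]
  simp only [hpair, forall_inner_eq_inner_add_inner_iff, sub_eq_zero, add_eq_zero_iff_eq_neg, hΘ,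
    Set.mem_ofPred_eq, Prod.mk.injEq]
  constructor
  · rintro ⟨rfl, rfl, rfl⟩
    exact ⟨a, c, c', by simp⟩
  · rintro ⟨u, v, w, ⟨rfl, rfl, rfl⟩, rfl, rfl, rfl⟩
    simp
end

section
/- Let H be a complex Hilbert space and let Θ, M, R be bounded linear operators on H such that Θ* = Θ, R* = R, R ∘ R = (2i)⁻¹(M − M*), and Θ − M is invertible with bounded inverse N. Then the operator U := I + 2i·R ∘ N ∘ R is unitary, i.e. U* ∘ U = I and U ∘ U* = I. -/
open ContinuousLinearMap

/-!
Write `c = 2i`, `X = R N R` and `Y = R N* R`. Since `Θ` is self-adjoint, `N*` inverts `Θ - M*`,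
and subtracting the two inverse relations gives the resolvent identity `N* (M - M*) N = N - N*`
(and `N (M - M*) N* = N - N*`). Sandwiched between two factors `R`, with `c R² = M - M*`, it
becomes `c Y X = X - Y` (and `c X Y = X - Y`). As `U = 1 + c X` and `U* = 1 - c Y`, expanding
`U* U` and `U U*` makes the quadratic term cancel the linear ones.
-/

section Ring

variable {𝕜 A : Type*} [CommRing 𝕜] [Ring A] [Algebra 𝕜 A]

theorem one_sub_smul_mul_one_add_smul_eq_one {c : 𝕜} {X Y : A} (h : c • (Y * X) = X - Y) :
    (1 - c • Y) * (1 + c • X) = 1 := by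
  rw [sub_mul, mul_add, mul_add, smul_mul_smul_comm, mul_smul, h]
  simp only [one_mul, mul_one, smul_sub]
  abel

theorem one_add_smul_mul_one_sub_smul_eq_one {c : 𝕜} {X Y : A} (h : c • (X * Y) = X - Y) :
    (1 + c • X) * (1 - c • Y) = 1 := by
  rw [add_mul, mul_sub, mul_sub, smul_mul_smul_comm, mul_smul, h]
  simp only [one_mul, mul_one, smul_sub]
  abel

end Ring

section StarRing

variable {A : Type*} [Ring A] [StarRing A]

theorem star_mul_sub_star_mul_eq_sub_star {Θ M N : A} (hΘ : IsSelfAdjoint Θ)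
    (hN : (Θ - M) * N = 1) : star N * (M - star M) * N = N - star N := by
  have hN' : star N * (Θ - star M) = 1 := by
    simpa only [star_mul, star_sub, hΘ.star_eq, star_one] using congrArg star hN
  rw [show M - star M = (Θ - star M) - (Θ - M) by abel, mul_sub, sub_mul, hN', one_mul,
    mul_assoc, hN, mul_one]

theorem mul_sub_star_mul_star_eq_sub_star {Θ M N : A} (hΘ : IsSelfAdjoint Θ)
    (hN : N * (Θ - M) = 1) : N * (M - star M) * star N = N - star N := by
  have hN' : (Θ - star M) * star N = 1 := by
    simpa only [star_mul, star_sub, hΘ.star_eq, star_one] using congrArg star hN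
  rw [show M - star M = (Θ - star M) - (Θ - M) by abel, mul_sub, sub_mul, mul_assoc, hN',
    mul_one, hN, one_mul]

end StarRing

section ComplexStarAlgebra

open Complex

variable {A : Type*} [Ring A] [StarRing A] [Algebra ℂ A] [StarModule ℂ A]

theorem star_one_add_two_I_smul {R N : A} (hR : IsSelfAdjoint R) :
    star (1 + (2 * I) • (R * N * R)) = 1 - (2 * I) • (R * star N * R) := by
  have hc : star (2 * I) = -(2 * I) := by simp
  rw [star_add, star_one, star_smul, hc, star_mul, star_mul, hR.star_eq, ← mul_assoc, neg_smul,
    sub_eq_add_neg]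

theorem one_add_two_I_smul_mem_unitary {Θ M R N : A} (hΘ : IsSelfAdjoint Θ)
    (hR : IsSelfAdjoint R) (hRR : R * R = (2 * I)⁻¹ • (M - star M))
    (hN1 : (Θ - M) * N = 1) (hN2 : N * (Θ - M) = 1) :
    1 + (2 * I) • (R * N * R) ∈ unitary A := by
  have sandwich (P Q : A) :
      (2 * I) • (R * P * R * (R * Q * R)) = R * (P * (M - star M) * Q) * R := by
    rw [← smul_inv_smul₀ (mul_ne_zero two_ne_zero I_ne_zero) (M - star M), ← hRR]
    simp only [mul_smul_comm, smul_mul_assoc, mul_assoc]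
  refine Unitary.mem_iff.mpr ⟨?_, ?_⟩ <;> rw [star_one_add_two_I_smul hR]
  · refine one_sub_smul_mul_one_add_smul_eq_one ?_
    rw [sandwich, star_mul_sub_star_mul_eq_sub_star hΘ hN1, mul_sub, sub_mul]
  · refine one_add_smul_mul_one_sub_smul_eq_one ?_
    rw [sandwich, mul_sub_star_mul_star_eq_sub_star hΘ hN2, mul_sub, sub_mul]

end ComplexStarAlgebra

/-- Unitarity of the abstract scattering matrix: if `Θ* = Θ`, `R* = R`,
`R² = (2i)⁻¹(M - M*) = Im M`, and `N` is a two-sided inverse of `Θ - M`, then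
`U = I + 2i·R N R` is unitary. -/
theorem stmt_7 (H : Type*) [NormedAddCommGroup H] [InnerProductSpace ℂ H]
    [CompleteSpace H] (Θ M R N : H →L[ℂ] H)
    (hΘ : adjoint Θ = Θ) (hR : adjoint R = R)
    (hRR : R * R = (2 * Complex.I)⁻¹ • (M - adjoint M))
    (hN1 : (Θ - M) * N = 1) (hN2 : N * (Θ - M) = 1) :
    adjoint (1 + (2 * Complex.I) • (R * N * R)) * (1 + (2 * Complex.I) • (R * N * R)) = 1 ∧
    (1 + (2 * Complex.I) • (R * N * R)) * adjoint (1 + (2 * Complex.I) • (R * N * R)) = 1 := by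
  simp only [← star_eq_adjoint] at hΘ hR hRR ⊢
  exact Unitary.mem_iff.mp (one_add_two_I_smul_mem_unitary hΘ hR hRR hN1 hN2)
end

section
/- Let H be a complex Hilbert space and let D, M, R be bounded linear operators on H such that R* = R, R ∘ R = −(2i)⁻¹(D − D*), Im⟨M h, h⟩ ≤ 0 for all h ∈ H, and D* − M is invertible with bounded inverse N. Then the operator W := I − 2i·R ∘ N ∘ R is a contraction, i.e. ‖W x‖ ≤ ‖x‖ for all x ∈ H. -/
open ContinuousLinearMap

/-!
With `y = N R x` we have `(D* - M) y = R x` and `W x = x - 2i R y`, so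
`‖W x‖² = ‖x‖² + 4 Im⟨R y, x⟩ + 4 ‖R y‖²`. Moving the self-adjoint `R` onto `x` gives
`Im⟨R y, x⟩ = Im⟨y, (D* - M) y⟩ = Im⟨D y, y⟩ + Im⟨M y, y⟩`, while `‖R y‖² = ⟨R² y, y⟩ = -Im⟨D y, y⟩`.
The `D`-terms cancel, leaving `‖W x‖² = ‖x‖² + 4 Im⟨M y, y⟩ ≤ ‖x‖²`.
-/

section

variable {E : Type*} [NormedAddCommGroup E] [InnerProductSpace ℂ E]

theorem norm_sub_two_I_smul_sq (x u : E) :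
    ‖x - (2 * Complex.I) • u‖ ^ 2 = ‖x‖ ^ 2 + 4 * (inner ℂ x u).im + 4 * ‖u‖ ^ 2 := by
  have hre : (2 * Complex.I * inner ℂ x u).re = -2 * (inner ℂ x u).im := by simp
  rw [@norm_sub_sq ℂ, inner_smul_right, norm_smul, RCLike.re_to_complex, hre, norm_mul,
    Complex.norm_two, Complex.norm_I]
  ring

theorem im_inner_apply_self_left (A : E →L[ℂ] E) (y : E) :
    (inner ℂ (A y) y).im = -(inner ℂ y (A y)).im := by
  rw [← inner_conj_symm, Complex.conj_im]

variable [CompleteSpace E]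

theorem im_inner_adjoint_sub_apply_self (D M : E →L[ℂ] E) (y : E) :
    (inner ℂ ((adjoint D - M) y) y).im = (inner ℂ y (D y)).im + (inner ℂ y (M y)).im := by
  rw [sub_apply, inner_sub_left, Complex.sub_im, adjoint_inner_left, im_inner_apply_self_left]
  ring

theorem norm_apply_sq_eq_neg_im_inner {R D : E →L[ℂ] E}
    (hRR : adjoint R * R = -((2 * Complex.I)⁻¹ • (D - adjoint D))) (y : E) :
    ‖R y‖ ^ 2 = -(inner ℂ y (D y)).im := by
  have hD : inner ℂ y ((D - adjoint D) y) = 2 * Complex.I * (inner ℂ y (D y)).im := by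
    rw [sub_apply, inner_sub_right, adjoint_inner_right, ← inner_conj_symm (D y) y, Complex.sub_conj]
    push_cast
    ring
  rw [apply_norm_sq_eq_inner_adjoint_right, ← mul_def, hRR, neg_apply, smul_apply, inner_neg_right,
    inner_smul_right, hD, inv_mul_cancel_left₀ (by simp)]
  simp

end

theorem stmt_8_general (H : Type*) [NormedAddCommGroup H] [InnerProductSpace ℂ H]
    [CompleteSpace H] (D M R N : H →L[ℂ] H)
    (hR : adjoint R = R)
    (hRR : R * R = -((2 * Complex.I)⁻¹ • (D - adjoint D)))
    (hM : ∀ h : H, ((inner ℂ h (M h) : ℂ)).im ≤ 0)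
    (hN1 : (adjoint D - M) * N = 1) :
    ∀ x : H, ‖(1 - (2 * Complex.I) • (R * N * R)) x‖ ≤ ‖x‖ := by
  intro x
  have hy : (adjoint D - M) (N (R x)) = R x := DFunLike.congr_fun hN1 (R x)
  have hWx : (1 - (2 * Complex.I) • (R * N * R)) x = x - (2 * Complex.I) • R (N (R x)) := rfl
  rw [← sq_le_sq₀ (norm_nonneg _) (norm_nonneg _), hWx]
  generalize N (R x) = y at hy ⊢
  have him : (inner ℂ x (R y)).im = (inner ℂ y (D y)).im + (inner ℂ y (M y)).im := by
    rw [← hR, adjoint_inner_right, ← hy, im_inner_adjoint_sub_apply_self]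
  have hRy : ‖R y‖ ^ 2 = -(inner ℂ y (D y)).im :=
    norm_apply_sq_eq_neg_im_inner (by rw [hR]; exact hRR) y
  rw [norm_sub_two_I_smul_sq, him, hRy]
  linarith [hM y]

/-- Contractivity of the characteristic function in the lower half-plane: if `R* = R`,
`R² = -(2i)⁻¹(D - D*) = -Im D`, `Im⟨Mh, h⟩ ≤ 0` for all `h` (the paper's inner product
being linear in the first argument, `⟨Mh, h⟩ = inner h (M h)` in Mathlib's convention),
and `N` is a two-sided inverse of `D* - M`, then `W = I - 2i·R N R` is a contraction. -/
theorem stmt_8 (H : Type*) [NormedAddCommGroup H] [InnerProductSpace ℂ H]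
    [CompleteSpace H] (D M R N : H →L[ℂ] H)
    (hR : adjoint R = R)
    (hRR : R * R = -((2 * Complex.I)⁻¹ • (D - adjoint D)))
    (hM : ∀ h : H, ((inner ℂ h (M h) : ℂ)).im ≤ 0)
    (hN1 : (adjoint D - M) * N = 1) (hN2 : N * (adjoint D - M) = 1) :
    ∀ x : H, ‖(1 - (2 * Complex.I) • (R * N * R)) x‖ ≤ ‖x‖ :=
  stmt_8_general H D M R N hR hRR hM hN1
end

section
/- Let v ∈ ℝ, m > 0, x₀ ∈ ℝ, and let λ ∈ ℂ be such that v − λ ∉ (−∞, 0] (equivalently, λ ∉ [v, ∞)). Set w := (2m(v − λ))^(1/2). Then: (i) Re w > 0; (ii) the function u₀(x) := exp(w·(x − x₀)) satisfies −(1/(2m))·u₀″(x) + v·u₀(x) = λ·u₀(x) for all x ∈ ℝ, and x ↦ |u₀(x)|² is integrable over (−∞, x₀); (iii) if u : ℝ → ℂ is differentiable on (−∞, x₀) with derivative u′, u′ is differentiable on (−∞, x₀) with derivative u″, −(1/(2m))·u″(x) + v·u(x) = λ·u(x) for all x < x₀, and x ↦ |u(x)|² is integrable over (−∞, x₀), then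 there exists c ∈ ℂ with u(x) = c·exp(w·x) for all x < x₀. -/
/-!
Since `v - λ` lies off the closed negative half-line, so does `2m(v - λ)`, and its principal
square root `w` has positive real part. The equation reads `u'' = w² u`, for which
`(u' ∓ w u) e^{± w x}` are first integrals; hence every solution on `(-∞, x₀)` is
`a e^{w x} + b e^{-w x}`. If `b ≠ 0` this blows up as `x → -∞`, so `|u|²` is not integrable
there.
-/

open MeasureTheory Set Filter Topology Complex

namespace Complex

lemma mem_slitPlane_iff_not_exists_nonpos {z : ℂ} :
    z ∈ slitPlane ↔ ¬ ∃ r : ℝ, r ≤ 0 ∧ z = r := by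
  rw [mem_slitPlane_iff_not_le_zero, nonpos_iff]
  refine not_congr ⟨fun h => ⟨z.re, h.1, ext rfl (by simpa using h.2)⟩, ?_⟩
  rintro ⟨r, hr, rfl⟩
  simpa using hr

lemma ofReal_mul_mem_slitPlane {r : ℝ} (hr : 0 < r) {z : ℂ} (hz : z ∈ slitPlane) :
    (r : ℂ) * z ∈ slitPlane := by
  rw [mem_slitPlane_iff, re_ofReal_mul, im_ofReal_mul] at *
  exact hz.imp (mul_pos hr) (mul_ne_zero hr.ne')

lemma re_cpow_one_half_pos {z : ℂ} (hz : z ∈ slitPlane) : 0 < (z ^ (1 / 2 : ℂ)).re := by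
  rw [one_div, cpow_inv_two_re, Real.sqrt_pos]
  have hne : -z.re ≠ ‖z‖ := mt neg_re_eq_norm.1 (mem_slitPlane_iff_not_le_zero.1 hz)
  have hle : -z.re ≤ ‖z‖ := neg_le.1 (abs_le.1 (abs_re_le_norm z)).1
  linarith [lt_of_le_of_ne hle hne]

lemma cpow_one_half_sq (z : ℂ) : (z ^ (1 / 2 : ℂ)) ^ 2 = z := by
  rw [one_div]
  exact cpow_ofNat_inv_pow z 2

end Complex

lemma hasDerivAt_cexp_mul_ofReal (c : ℂ) (x : ℝ) :
    HasDerivAt (fun y : ℝ => exp (c * y)) (c * exp (c * x)) x := by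
  simpa [mul_comm] using ((hasDerivAt_id (x : ℂ)).const_mul c).cexp.comp_ofReal

section SecondOrder

variable {u u' u'' : ℝ → ℂ}

lemma hasDerivAt_sub_mul_mul_cexp_eq_zero {c : ℂ} {x : ℝ} (hu : HasDerivAt u (u' x) x)
    (hu' : HasDerivAt u' (u'' x) x) (hode : u'' x = c ^ 2 * u x) :
    HasDerivAt (fun y : ℝ => (u' y - c * u y) * exp (c * y)) 0 x := by
  refine ((hu'.sub (hu.const_mul c)).mul (hasDerivAt_cexp_mul_ofReal c x)).congr_deriv ?_
  rw [Pi.sub_apply, hode]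
  ring

lemma exists_eq_mul_cexp_add_mul_cexp_neg {s : Set ℝ} (hs : IsOpen s) (hs' : IsPreconnected s)
    {w : ℂ} (hw : w ≠ 0) (hu : ∀ x ∈ s, HasDerivAt u (u' x) x)
    (hu' : ∀ x ∈ s, HasDerivAt u' (u'' x) x) (hode : ∀ x ∈ s, u'' x = w ^ 2 * u x) :
    ∃ a b : ℂ, ∀ x ∈ s, u x = a * exp (w * x) + b * exp (-w * x) := by
  have first_integral (c : ℂ) (hc : c ^ 2 = w ^ 2) :
      ∃ A, ∀ x ∈ s, (u' x - c * u x) * exp (c * x) = A := by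
    have hF : ∀ x ∈ s, HasDerivAt (fun y : ℝ => (u' y - c * u y) * exp (c * y)) 0 x :=
      fun x hx => hasDerivAt_sub_mul_mul_cexp_eq_zero (hu x hx) (hu' x hx) (hc ▸ hode x hx)
    exact hs.exists_is_const_of_deriv_eq_zero hs'
      (fun x hx => (hF x hx).differentiableAt.differentiableWithinAt)
      (fun x hx => (hF x hx).deriv)
  obtain ⟨A, hA⟩ := first_integral w rfl
  obtain ⟨B, hB⟩ := first_integral (-w) (neg_sq w)
  refine ⟨B / (2 * w), -A / (2 * w), fun x hx => ?_⟩
  have hexp : exp (w * x) * exp (-w * x) = 1 := by rw [← exp_add]; simp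
  have hBx := hB x hx
  simp only [neg_mul] at hexp hBx ⊢
  field_simp
  linear_combination exp (w * x) * hBx - exp (-(w * x)) * hA x hx - 2 * w * u x * hexp

lemma tendsto_norm_mul_cexp_add_mul_cexp_neg_atBot {w : ℂ} (hw : 0 < w.re) (a : ℂ) {b : ℂ}
    (hb : b ≠ 0) :
    Tendsto (fun x : ℝ => ‖a * exp (w * x) + b * exp (-w * x)‖) atBot atTop := by
  have hlow (x : ℝ) : ‖b‖ * Real.exp (-w.re * x) - ‖a‖ * Real.exp (w.re * x) ≤
      ‖a * exp (w * x) + b * exp (-w * x)‖ := by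
    have := norm_sub_le (a * exp (w * x) + b * exp (-w * x)) (a * exp (w * x))
    simp only [add_sub_cancel_left, norm_mul, norm_exp, re_mul_ofReal, neg_re] at this
    linarith
  refine tendsto_atTop_mono hlow ?_
  have hgrow : Tendsto (fun x : ℝ => ‖b‖ * Real.exp (-w.re * x)) atBot atTop :=
    (Real.tendsto_exp_atTop.comp
      (tendsto_id.const_mul_atBot_of_neg (neg_lt_zero.2 hw))).const_mul_atTop (norm_pos_iff.2 hb)
  have hdecay : Tendsto (fun x : ℝ => ‖a‖ * Real.exp (w.re * x)) atBot (𝓝 0) := by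
    simpa using (Real.tendsto_exp_atBot.comp (tendsto_id.const_mul_atBot hw)).const_mul ‖a‖
  simpa [sub_eq_add_neg] using hgrow.atTop_add hdecay.neg

end SecondOrder

lemma not_integrableOn_Iio_of_tendsto_atBot_atTop {f : ℝ → ℝ} (hf : Tendsto f atBot atTop)
    (a : ℝ) : ¬ IntegrableOn f (Iio a) := by
  intro hint
  obtain ⟨t, ht⟩ :=
    eventually_atBot.1 ((hf.eventually_ge_atTop 1).and (eventually_lt_atBot a))
  have hone : IntegrableOn (fun _ => (1 : ℝ)) (Iic t) := by
    refine Integrable.mono' (hint.mono_set (Iic_subset_Iio.2 (ht t le_rfl).2))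
      aestronglyMeasurable_const ((ae_restrict_iff' measurableSet_Iic).2 ?_)
    exact Eventually.of_forall fun x hx => by simpa using (ht x hx).1
  simp [integrableOn_const_iff] at hone

lemma eq_zero_of_integrableOn_Iio_norm_mul_cexp_add_mul_cexp_neg_sq {w : ℂ} (hw : 0 < w.re)
    {a b : ℂ} {x₀ : ℝ}
    (h : IntegrableOn (fun x : ℝ => ‖a * exp (w * x) + b * exp (-w * x)‖ ^ 2) (Iio x₀)) :
    b = 0 := by
  by_contra hb
  exact not_integrableOn_Iio_of_tendsto_atBot_atTop ((tendsto_pow_atTop two_ne_zero).comp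
    (tendsto_norm_mul_cexp_add_mul_cexp_neg_atBot hw a hb)) x₀ h

lemma integrableOn_Iio_norm_cexp_mul_sub_sq {w : ℂ} (hw : 0 < w.re) (x₀ : ℝ) :
    IntegrableOn (fun x : ℝ => ‖exp (w * (x - x₀))‖ ^ 2) (Iio x₀) := by
  have hnorm (x : ℝ) :
      ‖exp (w * (x - x₀))‖ ^ 2 = Real.exp (2 * w.re * x) * Real.exp (-(2 * w.re * x₀)) := by
    rw [norm_exp, ← Real.exp_nat_mul, ← Real.exp_add]
    simp only [mul_re, sub_re, sub_im, ofReal_re, ofReal_im]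
    push_cast
    ring_nf
  simp only [hnorm]
  exact IntegrableOn.mono_set
    (Integrable.mul_const (integrableOn_exp_mul_Iic (by positivity) x₀) _) Iio_subset_Iic_self

/-- For `λ ∉ [v, ∞)` and `w = (2m(v - λ))^{1/2}` (principal branch): (i) `Re w > 0`;
(ii) `u₀(x) = exp(w(x - x₀))` solves `-(1/(2m))u₀'' + v·u₀ = λ·u₀` and `|u₀|²` is
integrable on `(-∞, x₀)`; (iii) every square-integrable solution on `(-∞, x₀)` is a
scalar multiple of `x ↦ exp(w·x)` there. -/
theorem stmt_12 (v m x₀ : ℝ) (hm : 0 < m) (lam : ℂ)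
    (hlam : ¬ ∃ r : ℝ, r ≤ 0 ∧ (v : ℂ) - lam = (r : ℂ))
    (w : ℂ) (hw : w = (2 * (m : ℂ) * ((v : ℂ) - lam)) ^ ((1 : ℂ) / 2))
    (u₀ : ℝ → ℂ) (hu₀ : ∀ x : ℝ, u₀ x = Complex.exp (w * ((x : ℂ) - (x₀ : ℂ)))) :
    0 < w.re ∧
    (∀ x : ℝ,
      -(1 / (2 * (m : ℂ))) * deriv (deriv u₀) x + (v : ℂ) * u₀ x = lam * u₀ x) ∧
    IntegrableOn (fun x : ℝ => ‖u₀ x‖ ^ 2) (Set.Iio x₀) volume ∧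
    (∀ u u' u'' : ℝ → ℂ,
      (∀ x : ℝ, x < x₀ → HasDerivAt u (u' x) x) →
      (∀ x : ℝ, x < x₀ → HasDerivAt u' (u'' x) x) →
      (∀ x : ℝ, x < x₀ →
        -(1 / (2 * (m : ℂ))) * u'' x + (v : ℂ) * u x = lam * u x) →
      IntegrableOn (fun x : ℝ => ‖u x‖ ^ 2) (Set.Iio x₀) volume →
      ∃ c : ℂ, ∀ x : ℝ, x < x₀ → u x = c * Complex.exp (w * (x : ℂ))) := by
  have hz : 2 * (m : ℂ) * ((v : ℂ) - lam) ∈ slitPlane := by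
    simpa using ofReal_mul_mem_slitPlane (by positivity : 0 < 2 * m)
      (mem_slitPlane_iff_not_exists_nonpos.2 hlam)
  have hre : 0 < w.re := hw ▸ re_cpow_one_half_pos hz
  have hw2 : w ^ 2 = 2 * m * (v - lam) := hw ▸ cpow_one_half_sq _
  have hode_iff (f f'' : ℂ) :
      -(1 / (2 * (m : ℂ))) * f'' + v * f = lam * f ↔ f'' = w ^ 2 * f := by
    have : (m : ℂ) ≠ 0 := ofReal_ne_zero.2 hm.ne'
    rw [hw2]
    field_simp
    constructor <;> intro h <;> linear_combination -h
  have hu₀' (x : ℝ) : HasDerivAt u₀ (w * u₀ x) x := by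
    rw [funext hu₀, mul_comm w]
    simpa using (((hasDerivAt_id (x : ℂ)).sub_const (x₀ : ℂ)).const_mul w).cexp.comp_ofReal
  refine ⟨hre, fun x => (hode_iff _ _).2 ?_, ?_, fun u u' u'' hu hu' hode hint => ?_⟩
  · rw [show deriv u₀ = fun y => w * u₀ y from funext fun y => (hu₀' y).deriv,
      ((hu₀' x).const_mul w).deriv]
    ring
  · simpa only [hu₀] using integrableOn_Iio_norm_cexp_mul_sub_sq hre x₀
  · obtain ⟨a, b, hab⟩ := exists_eq_mul_cexp_add_mul_cexp_neg isOpen_Iio isPreconnected_Iio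
      (fun h => by simp [h] at hre) hu hu' fun x hx => (hode_iff _ _).1 (hode x hx)
    have hb : b = 0 := eq_zero_of_integrableOn_Iio_norm_mul_cexp_add_mul_cexp_neg_sq hre (a := a)
      (hint.congr_fun (fun x hx => by simp only [hab x hx]) measurableSet_Iio)
    exact ⟨a, fun x hx => by simp [hab x hx, hb]⟩
end

section
/- Let λ ∈ ℂ with λ ∉ [0, ∞), and set w := (−λ)^(1/2), so that Re w > 0. If f : ℝ → ℂ is continuous on ℝ, is differentiable at every x ≠ 0 with derivative f′, f′ is differentiable at every x ≠ 0 with derivative f″, −f″(x) = λ·f(x) for all x ≠ 0, and x ↦ |f(x)|² is integrable over ℝ, then f(x) = f(0)·exp(−w·|x|) for all x ∈ ℝ. -/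
/-!
On each half-line, `f' + w f` and `f' - w f` solve the first-order equations `u' = w u` and
`u' = -w u`, so `f = A e^{w x} + B e^{-w x}` there. Since `Re w > 0` the first term grows
exponentially, so square integrability forces `A = 0`, and continuity at `0` gives `B = f 0`.
The negative half-line is the positive one for `x ↦ f (-x)`.
-/

open MeasureTheory Filter Topology Set

namespace Complex

lemma neg_mem_slitPlane_of_forall_ne_ofReal {z : ℂ} (hz : ¬ ∃ r : ℝ, 0 ≤ r ∧ z = r) :
    -z ∈ slitPlane := by
  by_contra h
  simp only [mem_slitPlane_iff, neg_re, neg_im, not_or, not_not, Left.neg_pos_iff, not_lt,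
    neg_eq_zero] at h
  exact hz ⟨z.re, h.1, ext rfl (by simp [h.2])⟩

lemma re_cpow_one_div_two_pos {z : ℂ} (hz : z ∈ slitPlane) : 0 < (z ^ ((1 : ℂ) / 2)).re := by
  rw [one_div, cpow_inv_two_re, Real.sqrt_pos]
  rcases mem_slitPlane_iff.1 hz with hre | him
  · linarith [re_le_norm z]
  · linarith [abs_re_lt_norm.2 him, neg_abs_le z.re]

lemma cpow_one_div_two_mul_self (z : ℂ) : z ^ ((1 : ℂ) / 2) * z ^ ((1 : ℂ) / 2) = z := by
  rw [← sq, one_div]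
  exact cpow_ofNat_inv_pow z 2

end Complex

lemma not_integrableOn_Ioi_of_tendsto_atTop {g : ℝ → ℝ} (hg : Tendsto g atTop atTop) (a : ℝ) :
    ¬ IntegrableOn g (Ioi a) := by
  intro hint
  obtain ⟨N, hN⟩ := eventually_atTop.1 ((hg.eventually_ge_atTop 1).and (eventually_ge_atTop a))
  have hone : IntegrableOn (fun _ ↦ (1 : ℝ)) (Ioi N) := by
    refine (hint.mono_set (Ioi_subset_Ioi (hN N le_rfl).2)).mono' aestronglyMeasurable_const ?_
    filter_upwards [self_mem_ae_restrict measurableSet_Ioi] with x hx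
    simpa using (hN x hx.le).1
  simp [integrableOn_const_iff] at hone

lemma HasDerivAt.comp_neg {𝕜 F : Type*} [NontriviallyNormedField 𝕜] [NormedAddCommGroup F]
    [NormedSpace 𝕜 F] {f : 𝕜 → F} {f' : F} {x : 𝕜} (h : HasDerivAt f f' (-x)) :
    HasDerivAt (fun y ↦ f (-y)) (-f') x := by
  simpa [Function.comp_def] using h.scomp x (hasDerivAt_neg x)

lemma hasDerivAt_cexp_const_mul (c : ℂ) (x : ℝ) :
    HasDerivAt (fun t : ℝ ↦ Complex.exp (c * t)) (c * Complex.exp (c * x)) x := by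
  simpa [mul_comm] using (((hasDerivAt_id (x : ℂ)).const_mul c).cexp).comp_ofReal

lemma IsOpen.exists_eq_mul_cexp_of_hasDerivAt {s : Set ℝ} (hs : IsOpen s)
    (hs' : IsPreconnected s) {g : ℝ → ℂ} {c : ℂ} (hg : ∀ x ∈ s, HasDerivAt g (c * g x) x) :
    ∃ K, ∀ x ∈ s, g x = K * Complex.exp (c * x) := by
  have hderiv : ∀ x ∈ s, HasDerivAt (fun t ↦ g t * Complex.exp (-c * t)) 0 x := fun x hx ↦ by
    refine ((hg x hx).mul (hasDerivAt_cexp_const_mul (-c) x)).congr_deriv ?_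
    ring
  obtain ⟨K, hK⟩ := hs.exists_is_const_of_deriv_eq_zero hs'
    (fun x hx ↦ (hderiv x hx).differentiableAt.differentiableWithinAt)
    (fun x hx ↦ (hderiv x hx).deriv)
  refine ⟨K, fun x hx ↦ ?_⟩
  rw [← hK x hx, mul_assoc, ← Complex.exp_add, neg_mul, neg_add_cancel, Complex.exp_zero,
    mul_one]

lemma IsOpen.exists_eq_cexp_add_cexp_neg_of_hasDerivAt {s : Set ℝ} (hs : IsOpen s)
    (hs' : IsPreconnected s) {f f' f'' : ℝ → ℂ} {w : ℂ} (hw : w ≠ 0)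
    (hf : ∀ x ∈ s, HasDerivAt f (f' x) x) (hf' : ∀ x ∈ s, HasDerivAt f' (f'' x) x)
    (hode : ∀ x ∈ s, f'' x = w * w * f x) :
    ∃ A B, ∀ x ∈ s, f x = A * Complex.exp (w * x) + B * Complex.exp (-w * x) := by
  obtain ⟨C, hC⟩ := hs.exists_eq_mul_cexp_of_hasDerivAt hs' (g := fun x ↦ f' x + w * f x)
    (c := w) fun x hx ↦ by
      refine ((hf' x hx).add ((hf x hx).const_mul w)).congr_deriv ?_
      rw [hode x hx]; ring
  obtain ⟨D, hD⟩ := hs.exists_eq_mul_cexp_of_hasDerivAt hs' (g := fun x ↦ f' x - w * f x)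
    (c := -w) fun x hx ↦ by
      refine ((hf' x hx).sub ((hf x hx).const_mul w)).congr_deriv ?_
      rw [hode x hx]; ring
  refine ⟨C / (2 * w), -D / (2 * w), fun x hx ↦ ?_⟩
  have := congr_arg₂ (· - ·) (hC x hx) (hD x hx)
  rw [neg_mul] at this ⊢
  field_simp
  linear_combination this

lemma tendsto_norm_mul_cexp_add_mul_cexp_neg {w : ℂ} (hw : 0 < w.re) {A : ℂ} (hA : A ≠ 0)
    (B : ℂ) :
    Tendsto (fun x : ℝ ↦ ‖A * Complex.exp (w * x) + B * Complex.exp (-w * x)‖) atTop atTop := by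
  have hnorm (c : ℂ) (x : ℝ) : ‖Complex.exp (c * x)‖ = Real.exp (c.re * x) := by
    simp [Complex.norm_exp]
  have hgrow : Tendsto (fun x : ℝ ↦ ‖A‖ * Real.exp (w.re * x)) atTop atTop :=
    (Real.tendsto_exp_atTop.comp (tendsto_id.const_mul_atTop hw)).const_mul_atTop
      (norm_pos_iff.2 hA)
  have hdecay : Tendsto (fun x : ℝ ↦ -(‖B‖ * Real.exp (-w.re * x))) atTop (𝓝 (-(‖B‖ * 0))) :=
    ((Real.tendsto_exp_atBot.comp (tendsto_id.const_mul_atTop_of_neg (neg_neg_of_pos hw)))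
      |>.const_mul _).neg
  refine tendsto_atTop_mono (fun x ↦ ?_) (hgrow.atTop_add hdecay)
  have := norm_sub_norm_le (A * Complex.exp (w * x)) (-(B * Complex.exp (-w * x)))
  simp only [norm_neg, norm_mul, hnorm, sub_neg_eq_add, Complex.neg_re] at this
  linarith

lemma eq_mul_cexp_neg_of_integrableOn_sq {w : ℂ} (hw : 0 < w.re) {f f' f'' : ℝ → ℂ}
    (hcont : ContinuousWithinAt f (Ioi 0) 0)
    (hf : ∀ x, 0 < x → HasDerivAt f (f' x) x) (hf' : ∀ x, 0 < x → HasDerivAt f' (f'' x) x)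
    (hode : ∀ x, 0 < x → f'' x = w * w * f x)
    (hint : IntegrableOn (fun x ↦ ‖f x‖ ^ 2) (Ioi 0)) (x : ℝ) (hx : 0 ≤ x) :
    f x = f 0 * Complex.exp (-w * x) := by
  obtain ⟨A, B, hAB⟩ := isOpen_Ioi.exists_eq_cexp_add_cexp_neg_of_hasDerivAt isPreconnected_Ioi
    (ne_of_apply_ne Complex.re hw.ne') hf hf' hode
  have hA : A = 0 := by
    by_contra hA
    refine not_integrableOn_Ioi_of_tendsto_atTop
      ((tendsto_pow_atTop two_ne_zero).comp (tendsto_norm_mul_cexp_add_mul_cexp_neg hw hA B)) 0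
      (hint.congr_fun (fun x hx ↦ ?_) measurableSet_Ioi)
    simp [hAB x hx]
  have hB : B = f 0 := by
    refine tendsto_nhds_unique ?_ hcont
    have hcexp : Tendsto (fun x : ℝ ↦ B * Complex.exp (-w * x)) (𝓝[>] 0) (𝓝 B) := by
      have : Continuous fun x : ℝ ↦ B * Complex.exp (-w * x) := by fun_prop
      simpa using (this.tendsto 0).mono_left nhdsWithin_le_nhds
    refine hcexp.congr' ?_
    filter_upwards [self_mem_nhdsWithin] with y hy
    simp [hAB y hy, hA]
  rcases hx.eq_or_lt with rfl | hx
  · simp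
  · simp [hAB x hx, hA, hB]

/-- The defect subspace of `A = -d²/dx²` on `{f ∈ W²₂(ℝ) : f(0) = 0}`: for
`λ ∉ [0, ∞)` and `w = (-λ)^{1/2}` (principal branch, so `Re w > 0`), every continuous
square-integrable solution of `-f'' = λ f` away from `0` is
`f(x) = f(0)·exp(-w·|x|)`. -/
theorem stmt_13 (lam : ℂ) (hlam : ¬ ∃ r : ℝ, 0 ≤ r ∧ lam = (r : ℂ))
    (w : ℂ) (hw : w = (-lam) ^ ((1 : ℂ) / 2))
    (f f' f'' : ℝ → ℂ) (hcont : Continuous f)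
    (hf : ∀ x : ℝ, x ≠ 0 → HasDerivAt f (f' x) x)
    (hf' : ∀ x : ℝ, x ≠ 0 → HasDerivAt f' (f'' x) x)
    (hode : ∀ x : ℝ, x ≠ 0 → -f'' x = lam * f x)
    (hint : Integrable (fun x : ℝ => ‖f x‖ ^ 2) volume) :
    0 < w.re ∧ ∀ x : ℝ, f x = f 0 * Complex.exp (-w * ((|x| : ℝ) : ℂ)) := by
  have hre : 0 < w.re :=
    hw ▸ Complex.re_cpow_one_div_two_pos (Complex.neg_mem_slitPlane_of_forall_ne_ofReal hlam)
  have hode' : ∀ x, x ≠ 0 → f'' x = w * w * f x := fun x hx ↦ by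
    rw [hw, Complex.cpow_one_div_two_mul_self, neg_mul, ← hode x hx, neg_neg]
  refine ⟨hre, fun x ↦ ?_⟩
  rcases le_total 0 x with hx | hx
  · rw [abs_of_nonneg hx]
    exact eq_mul_cexp_neg_of_integrableOn_sq hre hcont.continuousWithinAt
      (fun y hy ↦ hf y hy.ne') (fun y hy ↦ hf' y hy.ne') (fun y hy ↦ hode' y hy.ne')
      hint.integrableOn x hx
  · have := eq_mul_cexp_neg_of_integrableOn_sq (f := fun y ↦ f (-y)) (f' := fun y ↦ -f' (-y))
      (f'' := fun y ↦ f'' (-y)) hre (hcont.comp continuous_neg).continuousWithinAt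
      (fun y hy ↦ (hf (-y) (neg_ne_zero.2 hy.ne')).comp_neg)
      (fun y hy ↦ (hf' (-y) (neg_ne_zero.2 hy.ne')).comp_neg.neg.congr_deriv (neg_neg _))
      (fun y hy ↦ hode' (-y) (neg_ne_zero.2 hy.ne')) hint.comp_neg.integrableOn (-x)
      (neg_nonneg.2 hx)
    simpa [abs_of_nonpos hx] using this
end
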